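/- Let γ > 1 and let U_L, U_R be states (ρ, u, v, p) with positive density and pressure. Define the entropy variables of the 2D Euler equations by v(U) = ((γ − s)/(γ−1) − β(u² + v²), 2βu, 2βv, −2β), where s = ln(p·ρ^{−γ}) and β = ρ/(2p), and the x-direction entropy flux potential by ψ(U) = ρu. Then the CH_RA two-point flux satisfies Tadmor's entropy-conservation condition: (v(U_R) − v(U_L)) · F^#(U_L, U_R) = ψ(U_R) − ψ(U_L). -/
import Mathlib


/-- Arithmetic mean `{{a}} = (a_L + a_R)/2`. -/
noncomputable def avg (aL aR : ℝ) : ℝ := (aL + aR) / 2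

/-- Logarithmic mean `a^ln = (a_L − a_R)/(ln a_L − ln a_R)`, defined as the common
value when the two arguments coincide. -/
noncomputable def logMean (aL aR : ℝ) : ℝ :=
  if aL = aR then aL else (aL - aR) / (Real.log aL - Real.log aR)

/-- The CH_RA (Chandrashekar–Ranocha) two-point flux in the x-direction, as a
function of the primitive states `(ρ, u, v, p)` on the left and right. -/
noncomputable def chraFlux (γ ρL uL vL pL ρR uR vR pR : ℝ) : Fin 4 → ℝ :=
  let ρh := logMean ρL ρR
  let uh := avg uL uR
  let vh := avg vL vR
  let p1 := avg pL pR
  let p2 := logMean (ρL / pL) (ρR / pR)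
  let hh := 1 / ((γ - 1) * p2) + (1 / 2) * (2 * uh ^ 2 - avg (uL ^ 2) (uR ^ 2))
    + (1 / 2) * (2 * vh ^ 2 - avg (vL ^ 2) (vR ^ 2)) + 2 * p1 / ρh
  ![ρh * uh, ρh * uh ^ 2 + p1, ρh * uh * vh, ρh * uh * hh - avg (uL * pL) (uR * pR)]

/-- Entropy variables of the 2D Euler equations for the state `(ρ, u, v, p)`:
`v(U) = ((γ − s)/(γ−1) − β(u²+v²), 2βu, 2βv, −2β)` with `s = ln(p ρ^{−γ})`,
`β = ρ/(2p)`. -/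
noncomputable def entropyVars (γ ρ u v p : ℝ) : Fin 4 → ℝ :=
  let s := Real.log (p * ρ ^ (-γ))
  let β := ρ / (2 * p)
  ![(γ - s) / (γ - 1) - β * (u ^ 2 + v ^ 2), 2 * β * u, 2 * β * v, -(2 * β)]

lemma logMean_pos {a b : ℝ} (ha : 0 < a) (hb : 0 < b) : 0 < logMean a b := by
  unfold logMean
  split_ifs with h
  · exact ha
  · rcases lt_or_gt_of_ne h with h' | h'
    · have := Real.log_lt_log ha h'
      exact div_pos_of_neg_of_neg (by linarith) (by linarith)
    · have := Real.log_lt_log hb h'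
      exact div_pos (by linarith) (by linarith)

lemma logMean_mul_log_sub {a b : ℝ} (ha : 0 < a) (hb : 0 < b) :
    logMean a b * (Real.log a - Real.log b) = a - b := by
  unfold logMean
  split_ifs with h
  · simp [h]
  · have hlog : Real.log a ≠ Real.log b := fun hc => h (Real.log_injOn_pos
      (Set.mem_Ioi.mpr ha) (Set.mem_Ioi.mpr hb) hc)
    rw [div_mul_cancel₀ _ (sub_ne_zero.mpr hlog)]

/-- Tadmor's entropy-conservation condition for the CH_RA two-point flux:
the jump in entropy variables dotted with the flux equals the jump in the
x-direction entropy flux potential `ψ(U) = ρu`. -/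
theorem chraFlux_entropy_conservative (γ : ℝ) (hγ : 1 < γ)
    (ρL uL vL pL ρR uR vR pR : ℝ)
    (hρL : 0 < ρL) (hpL : 0 < pL) (hρR : 0 < ρR) (hpR : 0 < pR) :
    ∑ i, (entropyVars γ ρR uR vR pR i - entropyVars γ ρL uL vL pL i) *
        chraFlux γ ρL uL vL pL ρR uR vR pR i =
      ρR * uR - ρL * uL := by
  have hγ1 : γ - 1 ≠ 0 := by linarith
  set r := logMean ρL ρR with hr
  set q := logMean (ρL / pL) (ρR / pR) with hq
  have hr0 : r ≠ 0 := (logMean_pos hρL hρR).ne'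
  have hq0 : q ≠ 0 := (logMean_pos (div_pos hρL hpL) (div_pos hρR hpR)).ne'
  have h1 : r * (Real.log ρL - Real.log ρR) = ρL - ρR := logMean_mul_log_sub hρL hρR
  have h2 : q * ((Real.log ρL - Real.log pL) - (Real.log ρR - Real.log pR))
      = ρL / pL - ρR / pR := by
    have := logMean_mul_log_sub (div_pos hρL hpL) (div_pos hρR hpR)
    rwa [Real.log_div hρL.ne' hpL.ne', Real.log_div hρR.ne' hpR.ne'] at this
  have ha : Real.log ρL = Real.log ρR + (ρL - ρR) / r := by
    field_simp
    linarith [h1]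
  have hc : Real.log pL = Real.log pR + (ρL - ρR) / r - (ρL / pL - ρR / pR) / q := by
    have h2' : (Real.log ρL - Real.log pL) - (Real.log ρR - Real.log pR)
        = (ρL / pL - ρR / pR) / q := by
      field_simp at h2 ⊢
      linarith [h2]
    rw [ha] at h2'
    linarith [h2']
  have hsL : Real.log (pL * ρL ^ (-γ)) = Real.log pL + (-γ) * Real.log ρL := by
    rw [Real.log_mul hpL.ne' (ne_of_gt (Real.rpow_pos_of_pos hρL _)), Real.log_rpow hρL]
  have hsR : Real.log (pR * ρR ^ (-γ)) = Real.log pR + (-γ) * Real.log ρR := by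
    rw [Real.log_mul hpR.ne' (ne_of_gt (Real.rpow_pos_of_pos hρR _)), Real.log_rpow hρR]
  simp only [entropyVars, chraFlux, Fin.sum_univ_four, Matrix.cons_val_zero,
    Matrix.cons_val_one, Matrix.head_cons, Matrix.cons_val_two, Matrix.tail_cons,
    Matrix.cons_val_three, avg, ← hr, ← hq, hsL, hsR, ha, hc]
  field_simp
  ring
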